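/- arXiv:1812.07687 — 2 statements merged into one kernel-verified Lean document; each statement's English description precedes it below -/
import Mathlib

section
/- Suppose α ∈ ℕ^{Q_0}, v is a loopfree vertex with (α, e_v) = 1, and α − e_v ∈ ~Σ_{q,θ} (the set of flat roots for the reflected data). If α = β^{(1)} + ⋯ + β^{(k)} is any decomposition with β^{(j)} ∈ R^+_{q,θ}, then p(α) ≥ Σ_j p(β^{(j)}). In other words, flatness is preserved under (−1)-reflections: if s_v(α) = α − e_v is flat then α is flat. -/
open Finset

variable {V A : Type*} [Fintype V] [DecidableEq V] [Fintype A]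

/-- Euler (Ringel) form of a quiver with arrow set `A`, tail `t`, head `h`. -/
def euler (t h : A → V) (α β : V → ℤ) : ℤ :=
  (∑ i, α i * β i) - ∑ a, α (t a) * β (h a)

/-- Symmetrised Cartan (Tits) form. -/
def cartan (t h : A → V) (α β : V → ℤ) : ℤ :=
  euler t h α β + euler t h β α

/-- Coordinate vector at a vertex. -/
def evec (i : V) : V → ℤ := fun j => if j = i then 1 else 0

/-- A vertex is loopfree if no arrow is a loop at it. -/
def loopfree (t h : A → V) (i : V) : Prop := ∀ a : A, ¬ (t a = i ∧ h a = i)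

/-- Simple reflection at a (loopfree) vertex: `s_i(α) = α - (α, e_i) e_i`. -/
def srefl (t h : A → V) (i : V) (α : V → ℤ) : V → ℤ :=
  fun j => α j - cartan t h α (evec i) * evec i j

/-- Multiplicative pairing `q^α = ∏ i, q i ^ α i`. -/
def qpow (q : V → ℂˣ) (α : V → ℤ) : ℂˣ := ∏ i, q i ^ α i

/-- `p(α) = 1 - ⟨α,α⟩`. -/
def pfun (t h : A → V) (α : V → ℤ) : ℤ := 1 - euler t h α α

/-- Adjacency of two vertices in the underlying graph. -/
def adj (t h : A → V) (i j : V) : Prop :=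
  ∃ a : A, (t a = i ∧ h a = j) ∨ (t a = j ∧ h a = i)

/-- The support of `α` is connected. -/
def connSupp (t h : A → V) (α : V → ℤ) : Prop :=
  ∀ i j, α i ≠ 0 → α j ≠ 0 →
    Relation.ReflTransGen (fun x y => adj t h x y ∧ α x ≠ 0 ∧ α y ≠ 0) i j

/-- The fundamental region: nonzero, nonnegative, connected support,
`(α, e_i) ≤ 0` for all vertices `i`. -/
def fundRegion (t h : A → V) (α : V → ℤ) : Prop :=
  α ≠ 0 ∧ (∀ i, 0 ≤ α i) ∧ connSupp t h α ∧ ∀ i, cartan t h α (evec i) ≤ 0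

/-- Roots of the quiver: obtained from coordinate vectors at loopfree vertices
(real roots) or from `±` elements of the fundamental region (imaginary roots)
by sequences of simple reflections at loopfree vertices. -/
inductive IsRoot (t h : A → V) : (V → ℤ) → Prop
  | real (i : V) : loopfree t h i → IsRoot t h (evec i)
  | fund (α : V → ℤ) : fundRegion t h α → IsRoot t h α
  | fundNeg (α : V → ℤ) : fundRegion t h α → IsRoot t h (-α)
  | reflect (α : V → ℤ) (i : V) : loopfree t h i → IsRoot t h α →
      IsRoot t h (srefl t h i α)

/-- `N_{q,θ}`: nonnegative vectors with `q^α = 1` and `θ·α = 0`. -/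
def Nqt (q : V → ℂˣ) (θ : V → ℤ) (α : V → ℤ) : Prop :=
  (∀ i, 0 ≤ α i) ∧ qpow q α = 1 ∧ (∑ i, θ i * α i) = 0

/-- Positive roots in `N_{q,θ}`. -/
def Rplus (t h : A → V) (q : V → ℂˣ) (θ : V → ℤ) (α : V → ℤ) : Prop :=
  IsRoot t h α ∧ Nqt q θ α

/-- The set `Σ_{q,θ}`: positive roots whose `p`-value strictly exceeds the total
`p`-value of any decomposition into at least two positive roots in `R^+_{q,θ}`. -/
def InSigma (t h : A → V) (q : V → ℂˣ) (θ : V → ℤ) (α : V → ℤ) : Prop :=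
  Rplus t h q θ α ∧
    ∀ L : List (V → ℤ), 2 ≤ L.length → (∀ β ∈ L, Rplus t h q θ β) →
      L.sum = α → (L.map (pfun t h)).sum < pfun t h α

/-- Flatness: every decomposition of `α` into positive roots in `R^+_{q,θ}` has
total `p`-value at most `p(α)`. -/
def Flat (t h : A → V) (q : V → ℂˣ) (θ : V → ℤ) (α : V → ℤ) : Prop :=
  ∀ L : List (V → ℤ), (∀ β ∈ L, Rplus t h q θ β) →
    L.sum = α → (L.map (pfun t h)).sum ≤ pfun t h α

/-!
Some member `β` of a decomposition of `α` into positive roots has `m = (β, e_v) ≥ 1`, because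
these pairings add up to `(α, e_v) = 1`. Drop `β` if it is `e_v` (recall `p(e_v) = 0`), and
otherwise replace it by `s_v β` and `m - 1` copies of `e_v`. This gives a decomposition of `α - e_v`
with the same total `p`-value, as `p` is `s_v`-invariant, and `p(α - e_v) = p(α) + (α, e_v) - 1`
equals `p(α)`.

The one non-formal point is that `s_v β ≥ 0`. Roots are sign coherent, so otherwise `β` would be a
multiple of `e_v`, and `(β, β) ≤ 2` leaves only `β = e_v`. Sign coherence is the classical Coxeter
group argument: `w e_s ≥ 0` whenever `ℓ(w) ≤ ℓ(w s)`, by induction on `ℓ(w)` through the rank-two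
subgroups, in which the orbit of `e_s` lies on the conic `a² + b² + abc = 1` with `c ≤ 0`; and
vectors in the fundamental region only grow under reflections.
-/

set_option linter.unusedSectionVars false

section Cartan

variable (t h : A → V)

lemma evec_eq_single (i : V) : evec i = Pi.single i 1 := by
  ext j
  simp [evec, Pi.single_apply]

lemma evec_nonneg (i : V) : 0 ≤ evec i := by
  simp [evec_eq_single]

lemma cartan_comm (x y : V → ℤ) : cartan t h x y = cartan t h y x :=
  add_comm _ _

lemma cartan_self_eq_two_mul_euler (x : V → ℤ) : cartan t h x x = 2 * euler t h x x :=
  (two_mul _).symm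

lemma cartan_add_left (x x' y : V → ℤ) :
    cartan t h (x + x') y = cartan t h x y + cartan t h x' y := by
  simp only [cartan, euler, Pi.add_apply, add_mul, mul_add, sum_add_distrib]; ring

lemma cartan_smul_left (c : ℤ) (x y : V → ℤ) :
    cartan t h (c • x) y = c * cartan t h x y := by
  simp only [cartan, euler, Pi.smul_apply, smul_eq_mul, mul_sub, mul_add, mul_sum]; ring_nf

def cartanForm : LinearMap.BilinForm ℤ (V → ℤ) :=
  LinearMap.mk₂ ℤ (cartan t h) (cartan_add_left t h) (cartan_smul_left t h)
    (fun x y y' => by simp only [cartan_comm t h x, cartan_add_left])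
    (fun c x y => by simp only [cartan_comm t h x, cartan_smul_left, smul_eq_mul])

@[simp] lemma cartanForm_apply (x y : V → ℤ) : cartanForm t h x y = cartan t h x y := rfl

lemma cartan_add_right (x y y' : V → ℤ) :
    cartan t h x (y + y') = cartan t h x y + cartan t h x y' :=
  (cartanForm t h x).map_add y y'

lemma cartan_sub_left (x x' y : V → ℤ) :
    cartan t h (x - x') y = cartan t h x y - cartan t h x' y :=
  (cartanForm t h).map_sub₂ x x' y

lemma cartan_sub_right (x y y' : V → ℤ) :
    cartan t h x (y - y') = cartan t h x y - cartan t h x y' :=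
  (cartanForm t h x).map_sub y y'

lemma cartan_smul_right (c : ℤ) (x y : V → ℤ) :
    cartan t h x (c • y) = c * cartan t h x y :=
  (cartanForm t h x).map_smul c y

lemma cartan_list_sum_left (L : List (V → ℤ)) (y : V → ℤ) :
    cartan t h L.sum y = (L.map (cartan t h · y)).sum :=
  map_list_sum ((cartanForm t h).flip y) L

lemma cartan_eq_sum_mul_cartan_evec (x y : V → ℤ) :
    cartan t h x y = ∑ k, y k * cartan t h x (evec k) := by
  conv_lhs => rw [pi_eq_sum_univ' y]
  simp only [evec_eq_single, ← cartanForm_apply, map_sum, map_smul, smul_eq_mul]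

lemma cartan_evec_self {v : V} (hv : loopfree t h v) : cartan t h (evec v) (evec v) = 2 := by
  have hloops : ∑ a, evec v (t a) * evec v (h a) = 0 :=
    sum_eq_zero fun a _ => by
      by_cases hta : t a = v
      · have hha : h a ≠ v := fun hha => hv a ⟨hta, hha⟩
        simp [evec, hha]
      · simp [evec, hta]
  have hdiag : ∑ i, evec v i * evec v i = 1 := by simp [evec]
  simp only [cartan, euler, hloops, hdiag]
  norm_num

lemma cartan_evec_evec_nonpos {i j : V} (hij : i ≠ j) : cartan t h (evec i) (evec j) ≤ 0 := by
  have hdiag : ∀ k, evec i k * evec j k = 0 := fun k => by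
    by_cases hk : k = i <;> simp_all [evec]
  have harrows : ∀ a, 0 ≤ evec i (t a) * evec j (h a) + evec j (t a) * evec i (h a) :=
    fun a => add_nonneg (mul_nonneg (evec_nonneg i _) (evec_nonneg j _))
      (mul_nonneg (evec_nonneg j _) (evec_nonneg i _))
  have := sum_nonneg fun a (_ : a ∈ univ) => harrows a
  simp only [cartan, euler, hdiag, mul_comm (evec j _) (evec i _), sum_const_zero,
    sum_add_distrib] at this ⊢
  linarith

end Cartan

section Reflection

variable {t h : A → V}

lemma srefl_eq (v : V) (x : V → ℤ) : srefl t h v x = x - cartan t h x (evec v) • evec v := by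
  ext j
  simp [srefl]

lemma srefl_apply_of_ne {v j : V} (hj : j ≠ v) (x : V → ℤ) : srefl t h v x j = x j := by
  simp [srefl, evec, hj]

variable (t h) in
def reflHom (v : V) : AddMonoid.End (V → ℤ) where
  toFun := srefl t h v
  map_zero' := by simp [srefl_eq, ← cartanForm_apply]
  map_add' x y := by simp only [srefl_eq, cartan_add_left, add_smul]; abel

variable {v : V}

lemma cartan_srefl_srefl (hv : loopfree t h v) (x y : V → ℤ) :
    cartan t h (srefl t h v x) (srefl t h v y) = cartan t h x y := by
  simp only [srefl_eq, cartan_sub_left, cartan_sub_right, cartan_smul_left, cartan_smul_right,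
    cartan_evec_self t h hv, cartan_comm t h (evec v) y]
  ring

lemma srefl_srefl (hv : loopfree t h v) (x : V → ℤ) : srefl t h v (srefl t h v x) = x := by
  rw [srefl_eq, srefl_eq, cartan_sub_left, cartan_smul_left, cartan_evec_self t h hv]
  ext j
  simp only [Pi.sub_apply, Pi.smul_apply, smul_eq_mul]
  ring

lemma srefl_evec_self (hv : loopfree t h v) : srefl t h v (evec v) = -evec v := by
  rw [srefl_eq, cartan_evec_self t h hv, two_smul]
  abel

lemma pfun_srefl (hv : loopfree t h v) (x : V → ℤ) : pfun t h (srefl t h v x) = pfun t h x := by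
  have := cartan_srefl_srefl hv x x
  rw [cartan_self_eq_two_mul_euler, cartan_self_eq_two_mul_euler] at this
  simp only [pfun]
  omega

lemma pfun_evec (hv : loopfree t h v) : pfun t h (evec v) = 0 := by
  have := cartan_evec_self t h hv
  rw [cartan_self_eq_two_mul_euler] at this
  simp only [pfun]
  omega

lemma pfun_sub_evec (hv : loopfree t h v) (x : V → ℤ) :
    pfun t h (x - evec v) = pfun t h x + cartan t h x (evec v) - 1 := by
  have hexp : cartan t h (x - evec v) (x - evec v) =
      cartan t h x x - 2 * cartan t h x (evec v) + 2 := by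
    rw [cartan_sub_left, cartan_sub_right, cartan_sub_right, cartan_evec_self t h hv,
      cartan_comm t h (evec v) x]
    ring
  rw [cartan_self_eq_two_mul_euler, cartan_self_eq_two_mul_euler] at hexp
  simp only [pfun]
  omega

end Reflection

section Words

variable (t h : A → V)

def reflWord (w : List V) : AddMonoid.End (V → ℤ) := (w.map (reflHom t h)).prod

variable {t h}

@[simp] lemma reflWord_nil : reflWord t h [] = 1 := rfl

@[simp] lemma reflWord_cons_apply (j : V) (w : List V) (x : V → ℤ) :
    reflWord t h (j :: w) x = srefl t h j (reflWord t h w x) := rfl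

lemma reflWord_append (w u : List V) :
    reflWord t h (w ++ u) = reflWord t h w * reflWord t h u := by
  simp [reflWord]

lemma reflWord_append_apply (w u : List V) (x : V → ℤ) :
    reflWord t h (w ++ u) x = reflWord t h w (reflWord t h u x) := by
  rw [reflWord_append]
  rfl

lemma reflWord_concat_apply (w : List V) (s : V) (x : V → ℤ) :
    reflWord t h (w ++ [s]) x = reflWord t h w (srefl t h s x) :=
  reflWord_append_apply w [s] x

lemma reflWord_append_pair {s : V} (hs : loopfree t h s) (w : List V) :
    reflWord t h (w ++ [s] ++ [s]) = reflWord t h w := by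
  ext1 x
  rw [reflWord_concat_apply, reflWord_concat_apply, srefl_srefl hs]

lemma cartan_reflWord {w : List V} (hw : ∀ j ∈ w, loopfree t h j) (x y : V → ℤ) :
    cartan t h (reflWord t h w x) (reflWord t h w y) = cartan t h x y := by
  induction w with
  | nil => rfl
  | cons j w ih =>
    rw [List.forall_mem_cons] at hw
    simp only [reflWord_cons_apply, cartan_srefl_srefl hw.1, ih hw.2]

lemma reflWord_concat_of_apply_evec {y : List V} {s j : V} (hy : ∀ k ∈ y, loopfree t h k)
    (hys : reflWord t h y (evec s) = evec j) :
    reflWord t h (y ++ [s]) = reflWord t h (j :: y) := by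
  ext1 x
  have hpair : cartan t h (reflWord t h y x) (evec j) = cartan t h x (evec s) := by
    rw [← hys, cartan_reflWord hy]
  rw [reflWord_concat_apply, reflWord_cons_apply, srefl_eq, map_sub, map_zsmul, hys, srefl_eq,
    hpair]

lemma reflWord_exchange {x y : List V} {s j : V} (hj : loopfree t h j)
    (hy : ∀ k ∈ y, loopfree t h k) (hys : reflWord t h y (evec s) = evec j) :
    reflWord t h (x ++ j :: y ++ [s]) = reflWord t h (x ++ y) := by
  ext1 z
  rw [List.append_assoc, List.cons_append, reflWord_append_apply, reflWord_append_apply,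
    reflWord_cons_apply, reflWord_concat_of_apply_evec hy hys, reflWord_cons_apply, srefl_srefl hj]

lemma cartan_reflWord_evec_self {w : List V} (hw : ∀ j ∈ w, loopfree t h j) {s : V}
    (hs : loopfree t h s) :
    cartan t h (reflWord t h w (evec s)) (reflWord t h w (evec s)) = 2 := by
  rw [cartan_reflWord hw, cartan_evec_self t h hs]

lemma exists_split_of_not_nonneg {γ : V → ℤ} (hγ : 0 ≤ γ) {z : List V}
    (hz : ¬ 0 ≤ reflWord t h z γ) :
    ∃ x j y, z = x ++ j :: y ∧ 0 ≤ reflWord t h y γ ∧ ¬ 0 ≤ srefl t h j (reflWord t h y γ) := by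
  induction z with
  | nil => exact absurd hγ hz
  | cons j z ih =>
    by_cases hzγ : 0 ≤ reflWord t h z γ
    · exact ⟨[], j, z, rfl, hzγ, hz⟩
    · obtain ⟨x, k, y, rfl, hy, hk⟩ := ih hzγ
      exact ⟨j :: x, k, y, rfl, hy, hk⟩

end Words

section Length

variable (t h : A → V)

/-- Word length in the reflections at the vertices of `S`; junk value `0` when `f` is not such a
product. -/
noncomputable def reflLength (S : Set V) (f : AddMonoid.End (V → ℤ)) : ℕ :=
  sInf {n | ∃ w : List V, (∀ j ∈ w, j ∈ S) ∧ w.length = n ∧ reflWord t h w = f}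

variable {S : Set V}

lemma reflLength_le {w : List V} (hw : ∀ j ∈ w, j ∈ S) :
    reflLength t h S (reflWord t h w) ≤ w.length :=
  Nat.sInf_le ⟨w, hw, rfl, rfl⟩

lemma exists_reduced_word {w : List V} (hw : ∀ j ∈ w, j ∈ S) :
    ∃ u : List V, (∀ j ∈ u, j ∈ S) ∧ u.length = reflLength t h S (reflWord t h w) ∧
      reflWord t h u = reflWord t h w :=
  Nat.sInf_mem (s := {n | ∃ u : List V, (∀ j ∈ u, j ∈ S) ∧ u.length = n ∧
    reflWord t h u = reflWord t h w}) ⟨w.length, w, hw, rfl, rfl⟩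

lemma reflLength_mono {T : Set V} (hST : S ⊆ T) {w : List V} (hw : ∀ j ∈ w, j ∈ S) :
    reflLength t h T (reflWord t h w) ≤ reflLength t h S (reflWord t h w) := by
  obtain ⟨u, huS, hlen, hu⟩ := exists_reduced_word t h hw
  rw [← hlen, ← hu]
  exact reflLength_le t h fun j hj => hST (huS j hj)

lemma reflLength_append_le {w u : List V} (hw : ∀ j ∈ w, j ∈ S) (hu : ∀ j ∈ u, j ∈ S) :
    reflLength t h S (reflWord t h (w ++ u)) ≤
      reflLength t h S (reflWord t h w) + reflLength t h S (reflWord t h u) := by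
  obtain ⟨w', hw'S, hw'len, hw'⟩ := exists_reduced_word t h hw
  obtain ⟨u', hu'S, hu'len, hu'⟩ := exists_reduced_word t h hu
  rw [← hw'len, ← hu'len, ← List.length_append, reflWord_append, ← hw', ← hu', ← reflWord_append]
  exact reflLength_le t h (List.forall_mem_append.2 ⟨hw'S, hu'S⟩)

lemma reflWord_eq_one_of_reflLength_eq_zero {w : List V} (hw : ∀ j ∈ w, j ∈ S)
    (h0 : reflLength t h S (reflWord t h w) = 0) : reflWord t h w = 1 := by
  obtain ⟨u, -, hlen, hu⟩ := exists_reduced_word t h hw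
  rw [← hu, List.eq_nil_of_length_eq_zero (hlen.trans h0), reflWord_nil]

end Length

section RankTwo

variable {t h : A → V} {s u : V}

lemma loopfree_of_mem_pair (hs : loopfree t h s) (hu : loopfree t h u) {j : V}
    (hj : j ∈ ({s, u} : Set V)) : loopfree t h j := by
  rcases hj with rfl | rfl <;> assumption

lemma srefl_mem_span_pair {j : V} (hj : j ∈ ({s, u} : Set V)) {γ : V → ℤ}
    (hγ : γ ∈ Submodule.span ℤ {evec s, evec u}) :
    srefl t h j γ ∈ Submodule.span ℤ {evec s, evec u} := by
  rw [srefl_eq]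
  refine Submodule.sub_mem _ hγ (Submodule.smul_mem _ _ (Submodule.subset_span ?_))
  rcases hj with rfl | rfl <;> simp

lemma nonneg_of_smul_evec_add_smul_evec_nonneg (hsu : s ≠ u) {a b : ℤ}
    (h0 : 0 ≤ a • evec s + b • evec u) : 0 ≤ a ∧ 0 ≤ b :=
  ⟨by simpa [evec, hsu] using h0 s, by simpa [evec, hsu.symm] using h0 u⟩

/-- For `γ = a e_s + b e_u` the norm condition reads `a² + b² + abc = 1` with
`c = (e_s, e_u) ≤ 0`, and `s_s γ ≱ 0` means `a + bc > 0`; for `a, b ≥ 0` this forces `γ = e_s`. -/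
lemma eq_evec_of_not_nonneg_srefl (hsu : s ≠ u) (hs : loopfree t h s) (hu : loopfree t h u)
    {j : V} (hj : j ∈ ({s, u} : Set V)) {γ : V → ℤ}
    (hγ : γ ∈ Submodule.span ℤ {evec s, evec u}) (hnorm : cartan t h γ γ = 2) (h0 : 0 ≤ γ)
    (hneg : ¬ 0 ≤ srefl t h j γ) : γ = evec j := by
  wlog hjs : j = s generalizing s u
  · have hju : j = u := by simpa [hjs] using hj
    exact this hsu.symm hu hs (by simp [hju]) (by rwa [Set.pair_comm]) hju
  subst s
  obtain ⟨a, b, rfl⟩ := Submodule.mem_span_pair.1 hγ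
  set c := cartan t h (evec j) (evec u)
  have hc : c ≤ 0 := cartan_evec_evec_nonpos t h hsu
  have hpair : cartan t h (a • evec j + b • evec u) (evec j) = 2 * a + b * c := by
    rw [cartan_add_left, cartan_smul_left, cartan_smul_left, cartan_evec_self t h hs,
      cartan_comm t h (evec u)]
    ring
  have hnorm' : a * a + b * b + a * b * c = 1 := by
    simp only [cartan_add_left, cartan_add_right, cartan_smul_left, cartan_smul_right,
      cartan_evec_self t h hs, cartan_evec_self t h hu, cartan_comm t h (evec u) (evec j)] at hnorm
    linarith
  obtain ⟨ha, hb⟩ := nonneg_of_smul_evec_add_smul_evec_nonneg hsu h0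
  have hlt : a - (2 * a + b * c) < 0 := by
    by_contra hge
    refine hneg (Pi.le_def.2 fun k => ?_)
    by_cases hk : k = j
    · subst k
      rw [srefl_eq, hpair]
      simpa [evec, hsu] using hge
    · rw [srefl_apply_of_ne hk]
      exact h0 k
  have hb0 : b = 0 := by nlinarith
  have ha1 : a = 1 := by subst b; nlinarith
  simp [ha1, hb0]

lemma reflWord_mem_span_pair {z : List V} (hz : ∀ j ∈ z, j ∈ ({s, u} : Set V)) {γ : V → ℤ}
    (hγ : γ ∈ Submodule.span ℤ {evec s, evec u}) :
    reflWord t h z γ ∈ Submodule.span ℤ {evec s, evec u} := by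
  induction z with
  | nil => exact hγ
  | cons j z ih =>
    rw [List.forall_mem_cons] at hz
    exact srefl_mem_span_pair hz.1 (ih hz.2)

lemma reflWord_evec_nonneg_of_reflLength_le_rank_two (hsu : s ≠ u) (hs : loopfree t h s)
    (hu : loopfree t h u) {z : List V} (hz : ∀ j ∈ z, j ∈ ({s, u} : Set V))
    (hlen : reflLength t h {s, u} (reflWord t h z) ≤
      reflLength t h {s, u} (reflWord t h (z ++ [s]))) :
    0 ≤ reflWord t h z (evec s) := by
  obtain ⟨z', hz'I, hz'len, hz'⟩ := exists_reduced_word t h hz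
  by_contra hneg
  rw [← hz'] at hneg
  -- `z'` leaves the positive cone at a letter `j` right after reaching `e_j`; deleting that
  -- letter gives a shorter word for `z s`.
  obtain ⟨x, j, y, rfl, hy, hj⟩ := exists_split_of_not_nonneg (evec_nonneg s) hneg
  simp only [List.forall_mem_append, List.forall_mem_cons] at hz'I
  obtain ⟨hxI, hjI, hyI⟩ := hz'I
  have hyl : ∀ k ∈ y, loopfree t h k := fun k hk => loopfree_of_mem_pair hs hu (hyI k hk)
  have hjl := loopfree_of_mem_pair hs hu hjI
  have hys : reflWord t h y (evec s) = evec j :=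
    eq_evec_of_not_nonneg_srefl hsu hs hu hjI
      (reflWord_mem_span_pair hyI (Submodule.subset_span (by simp)))
      (cartan_reflWord_evec_self hyl hs) hy hj
  have hshort : reflWord t h (z ++ [s]) = reflWord t h (x ++ y) := by
    rw [reflWord_append, ← hz', ← reflWord_append, reflWord_exchange hjl hyl hys]
  have := reflLength_le t h (List.forall_mem_append.2 ⟨hxI, hyI⟩)
  rw [← hshort] at this
  simp only [List.length_append, List.length_cons] at hz'len this
  omega

lemma reflWord_append_evec_nonneg (hsu : s ≠ u) {v z : List V}
    (hz : ∀ j ∈ z, j ∈ ({s, u} : Set V)) (hz0 : 0 ≤ reflWord t h z (evec s))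
    (hvs : 0 ≤ reflWord t h v (evec s)) (hvu : 0 ≤ reflWord t h v (evec u)) :
    0 ≤ reflWord t h (v ++ z) (evec s) := by
  have hspan : reflWord t h z (evec s) ∈ Submodule.span ℤ {evec s, evec u} :=
    reflWord_mem_span_pair hz (Submodule.subset_span (by simp))
  obtain ⟨a, b, hab⟩ := Submodule.mem_span_pair.1 hspan
  rw [← hab] at hz0
  obtain ⟨ha, hb⟩ := nonneg_of_smul_evec_add_smul_evec_nonneg hsu hz0
  rw [reflWord_append_apply, ← hab, map_add, map_zsmul, map_zsmul]
  exact add_nonneg (smul_nonneg ha hvs) (smul_nonneg hb hvu)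

end RankTwo

section SignCoherence

variable {t h : A → V}

variable (t h) in
/-- Humphreys' decompositions `w = v z` with `z ∈ W_I` and `ℓ(v) + ℓ_I(z) = ℓ(w)` (the reverse
inequality always holds). -/
def IsCosetDecomp (S I : Set V) (w v z : List V) : Prop :=
  (∀ j ∈ v, j ∈ S) ∧ (∀ j ∈ z, j ∈ I) ∧ reflWord t h (v ++ z) = reflWord t h w ∧
    reflLength t h S (reflWord t h v) + reflLength t h I (reflWord t h z) ≤
      reflLength t h S (reflWord t h w)

variable {S I : Set V}

lemma isCosetDecomp_self {w : List V} (hw : ∀ j ∈ w, j ∈ S) : IsCosetDecomp t h S I w w [] := by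
  refine ⟨hw, by simp, by rw [List.append_nil], ?_⟩
  rw [Nat.le_zero.1 (reflLength_le t h (S := I) (w := []) (by simp)), add_zero]

lemma IsCosetDecomp.exists_cons {w v z : List V} (hd : IsCosetDecomp t h S I w v z) {r : V}
    (hrS : r ∈ S) (hrI : r ∈ I) (hr : loopfree t h r)
    (hlt : reflLength t h S (reflWord t h (v ++ [r])) < reflLength t h S (reflWord t h v)) :
    ∃ v', IsCosetDecomp t h S I w v' (r :: z) ∧
      reflLength t h S (reflWord t h v') < reflLength t h S (reflWord t h v) := by
  obtain ⟨hvS, hzI, hvz, hlen⟩ := hd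
  obtain ⟨v', hv'S, hv'len, hv'⟩ :=
    exists_reduced_word t h (List.forall_mem_append.2 ⟨hvS, List.forall_mem_singleton.2 hrS⟩)
  have hrz := reflLength_append_le t h (List.forall_mem_singleton.2 hrI) hzI
  have hr1 := reflLength_le t h (List.forall_mem_singleton.2 hrI)
  simp only [List.singleton_append, List.length_singleton] at hrz hr1
  refine ⟨v', ⟨hv'S, List.forall_mem_cons.2 ⟨hrI, hzI⟩, ?_, ?_⟩, by rwa [hv']⟩
  · rw [reflWord_append, hv', ← reflWord_append]
    change reflWord t h (v ++ [r] ++ ([r] ++ z)) = _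
    rw [← List.append_assoc, reflWord_append _ z, reflWord_append_pair hr, ← reflWord_append, hvz]
  · rw [hv']
    omega

lemma exists_isCosetDecomp_minimal (hS : ∀ i ∈ S, loopfree t h i) {s u : V} (hsS : s ∈ S)
    (huS : u ∈ S) {w : List V} (hw : ∀ j ∈ w, j ∈ S) :
    ∃ v z, IsCosetDecomp t h S {s, u} w v z ∧
      reflLength t h S (reflWord t h v) ≤ reflLength t h S (reflWord t h (v ++ [s])) ∧
      reflLength t h S (reflWord t h v) ≤ reflLength t h S (reflWord t h (v ++ [u])) := by
  classical
  have hex : ∃ k, ∃ v z, IsCosetDecomp t h S {s, u} w v z ∧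
      reflLength t h S (reflWord t h v) = k :=
    ⟨_, w, [], isCosetDecomp_self hw, rfl⟩
  obtain ⟨v, z, hd, hvmin⟩ := Nat.find_spec hex
  have hmin : ∀ r ∈ ({s, u} : Set V),
      reflLength t h S (reflWord t h v) ≤ reflLength t h S (reflWord t h (v ++ [r])) := by
    intro r hr
    have hrS : r ∈ S := by rcases hr with rfl | rfl <;> assumption
    by_contra! hlt
    obtain ⟨v', hd', hv'⟩ := hd.exists_cons hrS hr (hS r hrS) hlt
    have := Nat.find_min' hex ⟨v', r :: z, hd', rfl⟩
    omega
  exact ⟨v, z, hd, hmin s (by simp), hmin u (by simp)⟩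

lemma IsCosetDecomp.reflLength_le_concat {w v z : List V} (hd : IsCosetDecomp t h S I w v z)
    (hIS : I ⊆ S) {s : V} (hsI : s ∈ I)
    (hws : reflLength t h S (reflWord t h w) ≤ reflLength t h S (reflWord t h (w ++ [s]))) :
    reflLength t h I (reflWord t h z) ≤ reflLength t h I (reflWord t h (z ++ [s])) := by
  obtain ⟨hvS, hzI, hvz, hlen⟩ := hd
  have hzsI : ∀ j ∈ z ++ [s], j ∈ I :=
    List.forall_mem_append.2 ⟨hzI, List.forall_mem_singleton.2 hsI⟩
  have hwvz : reflWord t h (w ++ [s]) = reflWord t h (v ++ (z ++ [s])) := by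
    rw [reflWord_append, ← hvz, ← reflWord_append, List.append_assoc]
  have hsub := reflLength_append_le t h hvS fun j hj => hIS (hzsI j hj)
  have hmono := reflLength_mono t h hIS hzsI
  rw [← hwvz] at hsub
  omega

/-- Humphreys, *Reflection groups and Coxeter groups*, Theorem 5.4: split off from `w` a longest
tail in the rank-two subgroup generated by `s` and the last letter `u` of a reduced word for `w`;
then apply rank two to the tail and induction on the length to the head. -/
theorem reflWord_evec_nonneg_of_reflLength_le (hS : ∀ i ∈ S, loopfree t h i) {s : V}
    (hsS : s ∈ S) {w : List V} (hw : ∀ j ∈ w, j ∈ S)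
    (hlen : reflLength t h S (reflWord t h w) ≤ reflLength t h S (reflWord t h (w ++ [s]))) :
    0 ≤ reflWord t h w (evec s) := by
  induction hn : reflLength t h S (reflWord t h w) using Nat.strong_induction_on
    generalizing s w with
  | _ n ih =>
  obtain ⟨w', hw'S, hw'len, hw'⟩ := exists_reduced_word t h hw
  rcases List.eq_nil_or_concat' w' with rfl | ⟨w'', u, rfl⟩
  · rw [← hw', reflWord_nil]
    exact evec_nonneg s
  rw [List.forall_mem_append, List.forall_mem_singleton] at hw'S
  have hu := hS u hw'S.2
  have hwu : reflLength t h S (reflWord t h (w ++ [u])) < n := by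
    have hback : reflWord t h (w ++ [u]) = reflWord t h w'' := by
      rw [reflWord_append, ← hw', ← reflWord_append, reflWord_append_pair hu]
    have := reflLength_le t h hw'S.1
    rw [← hback] at this
    simp only [List.length_append, List.length_singleton] at hw'len
    omega
  have hsu : s ≠ u := by rintro rfl; omega
  have hIS : ({s, u} : Set V) ⊆ S := Set.insert_subset hsS (Set.singleton_subset_iff.2 hw'S.2)
  obtain ⟨v, z, hd, hvs, hvu⟩ := exists_isCosetDecomp_minimal hS hsS hw'S.2 hw
  have ⟨hvS, hzI, hvz, hvzlen⟩ := hd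
  have hv : reflLength t h S (reflWord t h v) < n := by
    by_contra! hge
    have hz1 : reflWord t h z = 1 :=
      reflWord_eq_one_of_reflLength_eq_zero t h hzI (by omega)
    have hvw : reflWord t h (v ++ [u]) = reflWord t h (w ++ [u]) := by
      rw [reflWord_append, reflWord_append, ← hvz, reflWord_append, hz1, mul_one]
    rw [hvw] at hvu
    omega
  rw [← hvz]
  exact reflWord_append_evec_nonneg hsu hzI
    (reflWord_evec_nonneg_of_reflLength_le_rank_two hsu (hS s hsS) hu hzI
      (hd.reflLength_le_concat hIS (by simp) hlen))
    (ih _ hv hsS hvS hvs rfl) (ih _ hv hw'S.2 hvS hvu rfl)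

theorem reflWord_evec_nonneg_or_nonpos (hS : ∀ i ∈ S, loopfree t h i) {s : V} (hsS : s ∈ S)
    {w : List V} (hw : ∀ j ∈ w, j ∈ S) :
    0 ≤ reflWord t h w (evec s) ∨ reflWord t h w (evec s) ≤ 0 := by
  have hsS' : ∀ j ∈ [s], j ∈ S := List.forall_mem_singleton.2 hsS
  by_cases hlen : reflLength t h S (reflWord t h w) ≤ reflLength t h S (reflWord t h (w ++ [s]))
  · exact .inl (reflWord_evec_nonneg_of_reflLength_le hS hsS hw hlen)
  · right
    have hws := reflWord_evec_nonneg_of_reflLength_le hS hsS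
      (List.forall_mem_append.2 ⟨hw, hsS'⟩) (by rw [reflWord_append_pair (hS s hsS)]; omega)
    rwa [reflWord_concat_apply, srefl_evec_self (hS s hsS), map_neg, neg_nonneg] at hws

theorem le_reflWord_of_cartan_evec_nonpos (hS : ∀ i ∈ S, loopfree t h i) {α : V → ℤ}
    (hα : ∀ i ∈ S, cartan t h α (evec i) ≤ 0) {w : List V} (hw : ∀ j ∈ w, j ∈ S) :
    α ≤ reflWord t h w α := by
  obtain ⟨w', hw'S, hw'len, hw'⟩ := exists_reduced_word t h hw
  rw [← hw']
  replace hw'len : w'.length ≤ reflLength t h S (reflWord t h w') := by rw [hw', hw'len]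
  clear hw'
  induction w' using List.reverseRecOn with
  | nil => exact le_rfl
  | append_singleton u j ih =>
    rw [List.forall_mem_append, List.forall_mem_singleton] at hw'S
    have hj := List.forall_mem_singleton.2 hw'S.2
    have hsub := reflLength_append_le t h hw'S.1 hj
    have hu := reflLength_le t h hw'S.1
    have hj1 := reflLength_le t h hj
    simp only [List.length_append, List.length_singleton] at hw'len hj1
    have huj : 0 ≤ reflWord t h u (evec j) :=
      reflWord_evec_nonneg_of_reflLength_le hS hw'S.2 hw'S.1 (by omega)
    rw [reflWord_concat_apply, srefl_eq, map_sub, map_zsmul]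
    calc α ≤ reflWord t h u α := ih hw'S.1 (by omega)
      _ ≤ reflWord t h u α - cartan t h α (evec j) • reflWord t h u (evec j) :=
        (le_sub_self_iff _).2 (smul_nonpos_of_nonpos_of_nonneg (hα j hw'S.2) huj)

end SignCoherence

section Roots

variable {t h : A → V}

lemma le_reflWord_of_fundRegion {α : V → ℤ} (hα : fundRegion t h α) {w : List V}
    (hw : ∀ j ∈ w, loopfree t h j) : α ≤ reflWord t h w α :=
  le_reflWord_of_cartan_evec_nonpos (S := {i | loopfree t h i}) (fun _ => id)
    (fun i _ => hα.2.2.2 i) hw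

theorem IsRoot.reflWord_nonneg_or_nonpos {γ : V → ℤ} (hγ : IsRoot t h γ) {w : List V}
    (hw : ∀ j ∈ w, loopfree t h j) : 0 ≤ reflWord t h w γ ∨ reflWord t h w γ ≤ 0 := by
  induction hγ generalizing w with
  | real i hi =>
    exact reflWord_evec_nonneg_or_nonpos (S := {i | loopfree t h i}) (fun _ => id) hi hw
  | fund α hα => exact .inl ((Pi.le_def.2 hα.2.1).trans (le_reflWord_of_fundRegion hα hw))
  | fundNeg α hα =>
    rw [map_neg, neg_nonneg, neg_nonpos]
    exact .inr ((Pi.le_def.2 hα.2.1).trans (le_reflWord_of_fundRegion hα hw))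
  | reflect α i hi _ ih =>
    rw [← reflWord_concat_apply]
    exact ih (List.forall_mem_append.2 ⟨hw, List.forall_mem_singleton.2 hi⟩)

theorem IsRoot.nonneg_or_nonpos {γ : V → ℤ} (hγ : IsRoot t h γ) : 0 ≤ γ ∨ γ ≤ 0 :=
  hγ.reflWord_nonneg_or_nonpos (w := []) (by simp)

theorem IsRoot.cartan_self_le_two {γ : V → ℤ} (hγ : IsRoot t h γ) : cartan t h γ γ ≤ 2 := by
  have fund_nonpos : ∀ α, fundRegion t h α → cartan t h α α ≤ 0 := fun α hα => by
    rw [cartan_eq_sum_mul_cartan_evec]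
    exact sum_nonpos fun k _ => mul_nonpos_of_nonneg_of_nonpos (hα.2.1 k) (hα.2.2.2 k)
  induction hγ with
  | real i hi => rw [cartan_evec_self t h hi]
  | fund α hα => linarith [fund_nonpos α hα]
  | fundNeg α hα =>
    rw [← neg_one_smul ℤ α, cartan_smul_left, cartan_smul_right]
    linarith [fund_nonpos α hα]
  | reflect α i hi _ ih => rwa [cartan_srefl_srefl hi]

theorem IsRoot.srefl_nonneg {v : V} (hv : loopfree t h v) {β : V → ℤ} (hβ : IsRoot t h β)
    (h0 : 0 ≤ β) (hm : 1 ≤ cartan t h β (evec v)) (hne : β ≠ evec v) :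
    0 ≤ srefl t h v β := by
  refine (IsRoot.reflect β v hv hβ).nonneg_or_nonpos.resolve_right fun hneg => hne ?_
  have hβv : β = β v • evec v := by
    ext k
    by_cases hk : k = v
    · simp [hk, evec]
    · have := hneg k
      rw [Pi.zero_apply, srefl_apply_of_ne hk] at this
      simp [evec, hk, le_antisymm this (h0 k)]
  have hnorm := hβ.cartan_self_le_two
  rw [hβv, cartan_smul_left, cartan_smul_right, cartan_evec_self t h hv] at hnorm
  rw [hβv, cartan_smul_left, cartan_evec_self t h hv] at hm
  have hc : β v = 1 := by nlinarith
  rw [hβv, hc, one_smul]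

end Roots

section Flat

variable {t h : A → V} {q : V → ℂˣ} {θ : V → ℤ} {v : V}

lemma Nqt.sub_smul_evec (hq : q v = 1) (hθ : θ v = 0) {x : V → ℤ} (hx : Nqt q θ x) (m : ℤ)
    (h0 : 0 ≤ x - m • evec v) : Nqt q θ (x - m • evec v) := by
  obtain ⟨-, hqx, hθx⟩ := hx
  have hqv : ∀ i, q i ^ (m * evec v i) = 1 := fun i => by
    by_cases hi : i = v <;> simp [evec, hi, hq]
  refine ⟨h0, ?_, ?_⟩
  · simp only [qpow, Pi.sub_apply, Pi.smul_apply, smul_eq_mul, zpow_sub, hqv, inv_one,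
      mul_one]
    exact hqx
  · simp only [Pi.sub_apply, Pi.smul_apply, smul_eq_mul, mul_sub, sum_sub_distrib, hθx]
    simp [evec, hθ]

lemma rplus_evec (hv : loopfree t h v) (hq : q v = 1) (hθ : θ v = 0) : Rplus t h q θ (evec v) := by
  refine ⟨IsRoot.real v hv, evec_nonneg v, ?_, ?_⟩
  · simp [qpow, evec, hq]
  · simp [evec, hθ]

lemma Rplus.exists_decomp_sub_evec (hv : loopfree t h v) (hq : q v = 1) (hθ : θ v = 0)
    {β : V → ℤ} (hβ : Rplus t h q θ β) (hm : 1 ≤ cartan t h β (evec v)) :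
    ∃ L : List (V → ℤ), (∀ γ ∈ L, Rplus t h q θ γ) ∧ L.sum = β - evec v ∧
      (L.map (pfun t h)).sum = pfun t h β := by
  by_cases hβv : β = evec v
  · exact ⟨[], by simp, by simp [hβv], by simp [hβv, pfun_evec hv]⟩
  obtain ⟨n, hn⟩ := Int.eq_ofNat_of_zero_le (sub_nonneg.2 hm)
  have hsv : 0 ≤ srefl t h v β := hβ.1.srefl_nonneg hv hβ.2.1 hm hβv
  refine ⟨srefl t h v β :: List.replicate n (evec v), ?_, ?_, ?_⟩
  · rintro γ (_ | ⟨_, hγ⟩)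
    · rw [srefl_eq] at hsv ⊢
      exact ⟨IsRoot.reflect β v hv hβ.1, hβ.2.sub_smul_evec hq hθ _ hsv⟩
    · rw [List.eq_of_mem_replicate hγ]
      exact rplus_evec hv hq hθ
  · rw [List.sum_cons, List.sum_replicate, srefl_eq, ← natCast_zsmul, ← hn, sub_smul, one_smul]
    abel
  · simp [pfun_srefl hv, pfun_evec hv]

end Flat

/-- `q v = 1` and `θ v = 0` make the reflected data coincide with `(q, θ)`, so the flatness of
`α - e_v` is taken for the same data. -/
theorem flat_of_minus_one_reflection_general (t h : A → V) (q : V → ℂˣ) (θ : V → ℤ)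
    (α : V → ℤ) (v : V) (hv : loopfree t h v)
    (hpair : cartan t h α (evec v) = 1) (hq : q v = 1) (hθ : θ v = 0)
    (hflat : Flat t h q θ (fun i => α i - evec v i)) :
    Flat t h q θ α := by
  intro L hL hsum
  obtain ⟨β, hβL, hβ⟩ : ∃ β ∈ L, 0 < cartan t h β (evec v) :=
    List.exists_lt_of_sum_lt (fun _ => 0) _ (by simp [← cartan_list_sum_left, hsum, hpair])
  obtain ⟨L', hL', hL'sum, hL'p⟩ := (hL β hβL).exists_decomp_sub_evec hv hq hθ hβ
  have hrest : ∀ γ ∈ L.erase β, Rplus t h q θ γ := fun γ hγ => hL γ (List.mem_of_mem_erase hγ)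
  have hsum' : (L' ++ L.erase β).sum = α - evec v := by
    rw [List.sum_append, hL'sum, ← hsum, ← List.sum_erase hβL]
    abel
  have key := hflat _ (List.forall_mem_append.2 ⟨hL', hrest⟩) hsum'
  rw [List.map_append, List.sum_append, hL'p, List.sum_map_erase _ hβL] at key
  change _ ≤ pfun t h (α - evec v) at key
  rw [pfun_sub_evec hv, hpair] at key
  linarith

/-- flatness is preserved under `(-1)`-reflections: if
`(α, e_v) = 1` at a loopfree vertex `v` (with `q_v = 1`, `θ_v = 0`, so the
reflected data coincide with the original) and `α - e_v` is flat, then every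
decomposition of `α` into positive roots in `R^+_{q,θ}` has total `p`-value
at most `p(α)`, i.e. `α` is flat. -/
theorem flat_of_minus_one_reflection (t h : A → V) (q : V → ℂˣ) (θ : V → ℤ)
    (α : V → ℤ) (v : V) (hv : loopfree t h v) (hα : ∀ i, 0 ≤ α i)
    (hpair : cartan t h α (evec v) = 1) (hq : q v = 1) (hθ : θ v = 0)
    (hflat : Flat t h q θ (fun i => α i - evec v i)) :
    Flat t h q θ α :=
  flat_of_minus_one_reflection_general t h q θ α v hv hpair hq hθ hflat
end

section
/- Let Q be a crab-shaped quiver with g loops at the central vertex v and k legs, and α a sincere dimension vector with central value n. If g ≥ 1 and k ≥ 1 then (α, e_v) = 2(1−g)n − Σ_{i=1}^k α_{i,1} < 0; moreover if additionally α is in the fundamental region with (α,e_v) = −1 then g = 1, n = 2, k = 1 and α_{1,1} = 1. -/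
open Finset

/-- Sum of squares of the dimensions along a leg. -/
def legSq (l : List ℤ) : ℤ := (l.map (fun a => a ^ 2)).sum

/-- Sum of products of adjacent dimensions along a leg. -/
def legAdj : List ℤ → ℤ
  | [] => 0
  | [_] => 0
  | a :: b :: rest => a * b + legAdj (b :: rest)

/-- The fundamental-region inequalities `(α, e_j) ≤ 0` along a leg with
dimensions `l`, the previous (inner) dimension being `n`
(`2 a_j ≤ a_{j-1} + a_{j+1}`, with `a_{last+1} = 0`). -/
def legFund : ℤ → List ℤ → Prop
  | _, [] => True
  | n, a :: rest => 2 * a ≤ n + rest.headI ∧ legFund a rest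

/-- `⟨α,α⟩` for a crab-shaped quiver with `g` loops at the central vertex of
dimension `n`, and the given multiset of legs. -/
def crabEuler (g : ℕ) (n : ℤ) (legs : Multiset (List ℤ)) : ℤ :=
  (1 - (g : ℤ)) * n ^ 2 +
    (legs.map (fun l => legSq l - n * l.headI - legAdj l)).sum

/-- Sincerity: all dimensions positive (and every leg nonempty). -/
def crabSincere (n : ℤ) (legs : Multiset (List ℤ)) : Prop :=
  1 ≤ n ∧ ∀ l ∈ legs, l ≠ [] ∧ ∀ a ∈ l, 1 ≤ a

/-- The fundamental-region inequalities for a crab-shaped quiver: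
`(α, e_v) ≤ 0` at the central vertex and `(α, e_j) ≤ 0` along every leg. -/
def crabFund (g : ℕ) (n : ℤ) (legs : Multiset (List ℤ)) : Prop :=
  2 * (1 - (g : ℤ)) * n ≤ (legs.map List.headI).sum ∧
    ∀ l ∈ legs, legFund n l

/-!
The central pairing is `2(1-g)n` minus the sum of the first leg dimensions; the first term is
`≤ 0` once `g ≥ 1`, and sincerity makes the sum at least the number of legs, so the pairing is
negative. If it equals `-1`, both estimates are sharp: `g = 1` and there is a single leg starting
with `1`. In the fundamental region the dimensions strictly decrease along a positive leg, so that
leg is `[1]`, and then `⟨α,α⟩ = 1 - n = -1` gives `n = 2`.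
-/

theorem headI_lt_of_legFund {m : ℤ} {l : List ℤ} (hne : l ≠ []) (hpos : ∀ a ∈ l, 0 < a)
    (hf : legFund m l) : l.headI < m := by
  induction l generalizing m with
  | nil => exact absurd rfl hne
  | cons a rest ih =>
    obtain ⟨hle, hrest⟩ := hf
    have ha : 0 < a := hpos a List.mem_cons_self
    cases rest with
    | nil =>
      simp only [List.headI, Int.default_eq_zero] at hle ⊢
      linarith
    | cons b r =>
      have hb : b < a := ih (List.cons_ne_nil b r)
        (fun x hx => hpos x (List.mem_cons_of_mem a hx)) hrest
      simp only [List.headI] at hle ⊢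
      linarith

theorem eq_nil_of_legFund_one_cons {m : ℤ} {rest : List ℤ} (hpos : ∀ a ∈ rest, 0 < a)
    (hf : legFund m (1 :: rest)) : rest = [] := by
  cases rest with
  | nil => rfl
  | cons b r =>
    have hb : b < 1 := headI_lt_of_legFund (List.cons_ne_nil b r) hpos hf.2
    have := hpos b List.mem_cons_self
    omega

theorem crabSincere.card_le_sum_headI {n : ℤ} {legs : Multiset (List ℤ)}
    (hs : crabSincere n legs) : (Multiset.card legs : ℤ) ≤ (legs.map List.headI).sum := by
  simpa using Multiset.card_nsmul_le_sum (s := legs.map List.headI) (a := 1) (by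
    intro x hx
    obtain ⟨l, hl, rfl⟩ := Multiset.mem_map.mp hx
    obtain ⟨a, rest, rfl⟩ := List.exists_cons_of_ne_nil (hs.2 l hl).1
    exact (hs.2 _ hl).2 a List.mem_cons_self)

theorem crabEuler_singleton_one (g : ℕ) (n : ℤ) :
    crabEuler g n {[1]} = (1 - (g : ℤ)) * n ^ 2 + 1 - n := by
  simp only [crabEuler, legSq, legAdj, Multiset.map_singleton, Multiset.sum_singleton,
    List.map_cons, List.map_nil, List.sum_cons, List.sum_nil, List.headI]
  ring

/-- for a crab-shaped quiver with `g ≥ 1` loops, `k ≥ 1` legs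
and a sincere dimension vector, the central Cartan pairing
`(α,e_v) = 2(1-g)n - Σ α_{i,1}` is negative; moreover if in addition `α` is
in the fundamental region with `⟨α,α⟩ = -1` and `(α,e_v) = -1`, then `g = 1`,
`n = 2`, there is exactly one leg, and its first dimension is `1`. -/
theorem crab_central_pairing (g : ℕ) (n : ℤ) (legs : Multiset (List ℤ))
    (hg : 1 ≤ g) (hk : 1 ≤ Multiset.card legs)
    (hs : crabSincere n legs) :
    2 * (1 - (g : ℤ)) * n - (legs.map List.headI).sum < 0 ∧
    ((crabFund g n legs ∧ crabEuler g n legs = -1 ∧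
        2 * (1 - (g : ℤ)) * n - (legs.map List.headI).sum = -1) →
      (g = 1 ∧ n = 2 ∧ Multiset.card legs = 1 ∧
        ∀ l ∈ legs, l.headI = 1)) := by
  have hsum := hs.card_le_sum_headI
  have hk' : (1 : ℤ) ≤ Multiset.card legs := by exact_mod_cast hk
  have hg' : (1 : ℤ) ≤ g := by exact_mod_cast hg
  have hloops : 2 * (1 - (g : ℤ)) * n ≤ 0 := by nlinarith [hs.1]
  refine ⟨by linarith, ?_⟩
  rintro ⟨⟨-, hfund⟩, heuler, hpair⟩
  have hcard : Multiset.card legs = 1 := by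
    have : (Multiset.card legs : ℤ) ≤ 1 := by linarith
    omega
  have hg1 : g = 1 := by
    have : (g : ℤ) ≤ 1 := by nlinarith [hs.1]
    omega
  subst hg1
  obtain ⟨l, rfl⟩ := Multiset.card_eq_one.mp hcard
  obtain ⟨hne, hpos⟩ := hs.2 l (Multiset.mem_singleton_self l)
  have hhead : l.headI = 1 := by simpa using hpair
  obtain ⟨a, rest, rfl⟩ := List.exists_cons_of_ne_nil hne
  obtain rfl : a = 1 := hhead
  obtain rfl : rest = [] := eq_nil_of_legFund_one_cons
    (fun b hb => hpos b (List.mem_cons_of_mem 1 hb)) (hfund _ (Multiset.mem_singleton_self _))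
  rw [crabEuler_singleton_one, Nat.cast_one] at heuler
  refine ⟨rfl, by linarith, hcard, ?_⟩
  simp
end
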